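/- For any two ℂ-linear maps A, B on a unital commutative associative ℂ-algebra V, any n ≥ 1 and any f_1,…,f_n ∈ V, the Koszul brackets of the commutator [A,B] = A∘B − B∘A satisfy ⟨f_1,…,f_n⟩_n^{[A,B]} = Σ_{I ⊔ J = {1,…,n}, |I| = r ≥ 1} ( ⟨⟨f_{i_1},…,f_{i_r}⟩_r^B, f_{j_1},…,f_{j_{n−r}}⟩_{n−r+1}^A − ⟨⟨f_{i_1},…,f_{i_r}⟩_r^A, f_{j_1},…,f_{j_{n−r}}⟩_{n−r+1}^B ), where the sum ranges over all subsets I = {i_1,…,i_r} of {1,…,n} with complement J = {j_1,…,j_{n−r}}. -/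

import Mathlib

open Finset

section KoszulAux
variable {V : Type*} [CommRing V] {ι : Type*} [DecidableEq ι]

/-- Full-powerset polarization sum. -/
def KFz (D : V → V) (S : Finset ι) (f : ι → V) : V :=
  ∑ T ∈ S.powerset, (-1 : V) ^ (S.card + T.card) * ((∏ i ∈ S \ T, f i) * D (∏ i ∈ T, f i))

/-- Closed form of the Koszul bracket. -/
def Kz (D : V → V) (S : Finset ι) (f : ι → V) : V :=
  ∑ T ∈ S.powerset.filter (fun T => T.Nonempty),
    (-1 : V) ^ (S.card + T.card) * ((∏ i ∈ S \ T, f i) * D (∏ i ∈ T, f i))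

variable {D D₁ D₂ : V → V} {S : Finset ι} {f g : ι → V} {a : ι}

lemma Kz_empty : Kz D (∅ : Finset ι) f = 0 := by
  simp [Kz, Finset.filter_singleton]

lemma KFz_eq : KFz D S f = Kz D S f + (-1 : V) ^ S.card * ((∏ i ∈ S, f i) * D 1) := by
  have h : S.powerset.filter (fun T => ¬ T.Nonempty) = {∅} := by
    ext T
    simp [Finset.not_nonempty_iff_eq_empty]
    rintro rfl; exact empty_subset _
  rw [KFz, Kz, ← Finset.sum_filter_add_sum_filter_not S.powerset (fun T => T.Nonempty), h]
  simp

lemma KFz_congr (h : ∀ i ∈ S, f i = g i) : KFz D S f = KFz D S g := by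
  refine Finset.sum_congr rfl fun T hT => ?_
  rw [mem_powerset] at hT
  rw [Finset.prod_congr rfl fun i hi => h i (sdiff_subset hi),
    Finset.prod_congr rfl fun i hi => h i (hT hi)]

lemma Kz_congr (h : ∀ i ∈ S, f i = g i) : Kz D S f = Kz D S g := by
  refine Finset.sum_congr rfl fun T hT => ?_
  rw [mem_filter, mem_powerset] at hT
  rw [Finset.prod_congr rfl fun i hi => h i (sdiff_subset hi),
    Finset.prod_congr rfl fun i hi => h i (hT.1 hi)]

lemma KFz_insert (ha : a ∉ S) :
    KFz D (insert a S) f = KFz (fun x => D (f a * x)) S f - f a * KFz D S f := by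
  rw [KFz, Finset.sum_powerset_insert ha]
  have h1 : ∀ T ∈ S.powerset,
      (-1 : V) ^ ((insert a S).card + T.card) *
        ((∏ i ∈ insert a S \ T, f i) * D (∏ i ∈ T, f i))
      = -((-1 : V) ^ (S.card + T.card) * (f a * ((∏ i ∈ S \ T, f i) * D (∏ i ∈ T, f i)))) := by
    intro T hT
    rw [mem_powerset] at hT
    have hTa : a ∉ T := fun h => ha (hT h)
    have hset : insert a S \ T = insert a (S \ T) := by
      ext x; simp only [mem_sdiff, mem_insert]
      constructor
      · rintro ⟨h1 | h1, h2⟩ <;> simp_all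
      · rintro (rfl | ⟨h1, h2⟩) <;> simp_all
    rw [hset, Finset.prod_insert (fun h => ha (sdiff_subset h)),
      card_insert_of_notMem ha]
    rw [show S.card + 1 + T.card = (S.card + T.card) + 1 by ring, pow_succ]
    ring
  have h2 : ∀ T ∈ S.powerset,
      (-1 : V) ^ ((insert a S).card + (insert a T).card) *
        ((∏ i ∈ insert a S \ insert a T, f i) * D (∏ i ∈ insert a T, f i))
      = (-1 : V) ^ (S.card + T.card) * ((∏ i ∈ S \ T, f i) * D (f a * ∏ i ∈ T, f i)) := by
    intro T hT
    rw [mem_powerset] at hT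
    have hTa : a ∉ T := fun h => ha (hT h)
    have hset : insert a S \ insert a T = S \ T := by
      ext x; simp only [mem_sdiff, mem_insert, not_or]
      constructor
      · rintro ⟨h1 | h1, h2, h3⟩ <;> simp_all
      · rintro ⟨h1, h2⟩
        refine ⟨Or.inr h1, fun h => ha (h ▸ h1), h2⟩
    rw [hset, Finset.prod_insert hTa, card_insert_of_notMem ha, card_insert_of_notMem hTa]
    rw [show S.card + 1 + (T.card + 1) = (S.card + T.card) + 2 by ring, pow_add]
    ring
  rw [Finset.sum_congr rfl h1, Finset.sum_congr rfl h2, Finset.sum_neg_distrib]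
  have h3 : f a * KFz D S f
      = ∑ T ∈ S.powerset, (-1 : V) ^ (S.card + T.card) *
          (f a * ((∏ i ∈ S \ T, f i) * D (∏ i ∈ T, f i))) := by
    rw [KFz, Finset.mul_sum]
    exact Finset.sum_congr rfl fun T _ => by ring
  rw [h3, KFz]
  ring

lemma Kz_insert (ha : a ∉ S) :
    Kz D (insert a S) f = KFz (fun x => D (f a * x)) S f - f a * Kz D S f := by
  have e1 := KFz_eq (D := D) (S := insert a S) (f := f)
  have e2 := KFz_eq (D := D) (S := S) (f := f)
  have e3 := KFz_eq (D := fun x => D (f a * x)) (S := S) (f := f)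
  rw [KFz_insert ha, Finset.prod_insert ha, card_insert_of_notMem ha, pow_succ] at e1
  linear_combination -e1 - f a * e2

lemma Kz_sub :
    Kz (fun x => D₁ x - D₂ x) S f = Kz D₁ S f - Kz D₂ S f := by
  rw [Kz, Kz, Kz, ← Finset.sum_sub_distrib]
  refine Finset.sum_congr rfl fun T _ => by ring

lemma KFz_map {κ : Type*} [DecidableEq κ] (e : ι ↪ κ) (S : Finset ι) (D : V → V) (g : κ → V) :
    KFz D (S.map e) g = KFz D S (g ∘ e) := by
  induction S using Finset.induction_on generalizing D with
  | empty => simp [KFz]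
  | insert a s ha ih =>
    rw [Finset.map_insert, KFz_insert (by simpa using ha), KFz_insert ha, ih, ih]
    rfl

lemma Kz_map {κ : Type*} [DecidableEq κ] (e : ι ↪ κ) (S : Finset ι) (D : V → V) (g : κ → V) :
    Kz D (S.map e) g = Kz D S (g ∘ e) := by
  have e1 := KFz_eq (D := D) (S := S.map e) (f := g)
  have e2 := KFz_eq (D := D) (S := S) (f := g ∘ e)
  rw [KFz_map e S D g] at e1
  rw [Finset.prod_map, Finset.card_map] at e1
  simp only [Function.comp_apply] at e2
  linear_combination e2 - e1


lemma neg_one_pow_par {m k : ℕ} (h : m % 2 = k % 2) : ((-1 : V)) ^ m = (-1) ^ k := by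
  conv_lhs => rw [← Nat.div_add_mod m 2]
  conv_rhs => rw [← Nat.div_add_mod k 2]
  rw [h, pow_add, pow_add, pow_mul, pow_mul, neg_one_sq, one_pow, one_pow]

lemma sum_neg_one_pow (W : Finset ι) :
    ∑ P ∈ W.powerset, ((-1 : V)) ^ P.card = if W = ∅ then 1 else 0 := by
  have := Finset.sum_powerset_neg_one_pow_card (x := W)
  have h2 := congrArg (fun z : ℤ => (z : V)) this
  push_cast at h2
  simpa using h2

variable [Algebra ℂ V]

lemma map_neg_one_pow_mul (A : V →ₗ[ℂ] V) (k : ℕ) (x : V) :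
    A ((-1 : V) ^ k * x) = (-1 : V) ^ k * A x := by
  rcases Nat.even_or_odd k with h | h
  · rw [h.neg_one_pow, one_mul, one_mul]
  · rw [h.neg_one_pow, neg_one_mul, neg_one_mul, map_neg]

lemma M1 (A : V →ₗ[ℂ] V) (B : V → V) (S : Finset ι) (f : ι → V) :
    ∑ I ∈ S.powerset.filter (fun I => I.Nonempty),
      KFz (fun x => A (Kz B I f * x)) (S \ I) f
    = Kz (fun x => A (B x)) S f := by
  classical
  -- expand each `KFz` into a triple sum
  have expand : ∀ I ∈ S.powerset.filter (fun I => I.Nonempty),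
      KFz (fun x => A (Kz B I f * x)) (S \ I) f
      = ∑ T ∈ (S \ I).powerset, ∑ U ∈ I.powerset.filter (fun U => U.Nonempty),
          (-1 : V) ^ ((S \ I).card + T.card + (I.card + U.card)) *
            ((∏ i ∈ (S \ I) \ T, f i) *
              A ((∏ i ∈ I \ U, f i) * B (∏ i ∈ U, f i) * ∏ i ∈ T, f i)) := by
    intro I _
    rw [KFz]
    refine Finset.sum_congr rfl fun T _ => ?_
    rw [Kz, Finset.sum_mul, map_sum, Finset.mul_sum, Finset.mul_sum]
    refine Finset.sum_congr rfl fun U _ => ?_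
    rw [show ((-1 : V) ^ (I.card + U.card) * ((∏ i ∈ I \ U, f i) * B (∏ i ∈ U, f i)))
          * ∏ i ∈ T, f i
        = (-1 : V) ^ (I.card + U.card) *
            ((∏ i ∈ I \ U, f i) * B (∏ i ∈ U, f i) * ∏ i ∈ T, f i) by ring,
      map_neg_one_pow_mul, pow_add]
    ring
  rw [Finset.sum_congr rfl expand]
  -- flatten to a sum over a sigma type
  rw [Finset.sum_congr rfl (fun I _ => Finset.sum_sigma' ((S \ I).powerset)
      (fun _ => I.powerset.filter (fun U => U.Nonempty)) _),
    Finset.sum_sigma' (S.powerset.filter (fun I => I.Nonempty))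
      (fun I => ((S \ I).powerset).sigma (fun _ => I.powerset.filter (fun U => U.Nonempty))) _]
  -- reindex (I, T, U) ↦ (U, (I\U) ∪ T, I\U)
  rw [Finset.sum_nbij'
    (i := fun x : (_ : Finset ι) × (_ : Finset ι) × Finset ι =>
      (⟨x.2.2, ⟨(x.1 \ x.2.2) ∪ x.2.1, x.1 \ x.2.2⟩⟩ : (_ : Finset ι) × (_ : Finset ι) × Finset ι))
    (j := fun y : (_ : Finset ι) × (_ : Finset ι) × Finset ι =>
      (⟨y.1 ∪ y.2.2, ⟨y.2.1 \ y.2.2, y.1⟩⟩ : (_ : Finset ι) × (_ : Finset ι) × Finset ι))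
    (t := (S.powerset.filter (fun U => U.Nonempty)).sigma
      (fun U => ((S \ U).powerset).sigma (fun W => W.powerset)))
    (g := fun y : (_ : Finset ι) × (_ : Finset ι) × Finset ι =>
      (-1 : V) ^ (S.card + y.1.card + y.2.1.card + y.2.2.card) *
        ((∏ i ∈ S \ (y.1 ∪ y.2.1), f i) *
          A ((∏ i ∈ y.2.2, f i) * B (∏ i ∈ y.1, f i) * ∏ i ∈ y.2.1 \ y.2.2, f i)))
    ?_ ?_ ?_ ?_ ?_]
  · -- after reindexing: collapse the inner sums
    rw [Finset.sum_sigma, Kz]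
    refine Finset.sum_congr rfl fun U hU => ?_
    rw [Finset.sum_sigma]
    have inner : ∀ W ∈ (S \ U).powerset,
        (∑ P ∈ W.powerset,
          (-1 : V) ^ (S.card + U.card + W.card + P.card) *
            ((∏ i ∈ S \ (U ∪ W), f i) *
              A ((∏ i ∈ P, f i) * B (∏ i ∈ U, f i) * ∏ i ∈ W \ P, f i)))
        = if W = ∅ then
            (-1 : V) ^ (S.card + U.card) * ((∏ i ∈ S \ U, f i) * A (B (∏ i ∈ U, f i)))
          else 0 := by
      intro W _
      have hterm : ∀ P ∈ W.powerset,
          (-1 : V) ^ (S.card + U.card + W.card + P.card) *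
            ((∏ i ∈ S \ (U ∪ W), f i) *
              A ((∏ i ∈ P, f i) * B (∏ i ∈ U, f i) * ∏ i ∈ W \ P, f i))
          = (-1 : V) ^ P.card *
              ((-1 : V) ^ (S.card + U.card + W.card) *
                ((∏ i ∈ S \ (U ∪ W), f i) * A ((∏ i ∈ W, f i) * B (∏ i ∈ U, f i)))) := by
        intro P hP
        rw [mem_powerset] at hP
        have harg : (∏ i ∈ P, f i) * B (∏ i ∈ U, f i) * ∏ i ∈ W \ P, f i
            = (∏ i ∈ W, f i) * B (∏ i ∈ U, f i) := by
          rw [mul_right_comm, mul_comm (∏ i ∈ P, f i) (∏ i ∈ W \ P, f i),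
            Finset.prod_sdiff hP]
        rw [harg, pow_add]
        ring
      rw [Finset.sum_congr rfl hterm, ← Finset.sum_mul, sum_neg_one_pow]
      by_cases hW : W = ∅
      · rw [if_pos hW, if_pos hW, hW]
        simp
      · rw [if_neg hW, if_neg hW, zero_mul]
    rw [Finset.sum_congr rfl inner, Finset.sum_ite_eq' ((S \ U).powerset) ∅ _,
      if_pos (Finset.empty_mem_powerset _)]
  · -- membership i
    rintro ⟨I, T, U⟩ hx
    simp only [mem_sigma, mem_filter, mem_powerset] at hx ⊢
    obtain ⟨⟨hIS, hIne⟩, hT, hU, hUne⟩ := hx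
    refine ⟨⟨hU.trans hIS, hUne⟩, ?_, subset_union_left⟩
    intro x hxmem
    rw [mem_union] at hxmem
    rcases hxmem with h | h
    · rw [mem_sdiff] at h ⊢
      exact ⟨hIS h.1, h.2⟩
    · have := hT h
      rw [mem_sdiff] at this ⊢
      exact ⟨this.1, fun hc => this.2 (hU hc)⟩
  · -- membership j
    rintro ⟨U, W, P⟩ hy
    simp only [mem_sigma, mem_filter, mem_powerset] at hy ⊢
    obtain ⟨⟨hUS, hUne⟩, hW, hP⟩ := hy
    have hPS : P ⊆ S \ U := hP.trans hW
    refine ⟨⟨?_, hUne.mono subset_union_left⟩, ?_, subset_union_left, hUne⟩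
    · intro x hxm
      rw [mem_union] at hxm
      rcases hxm with h | h
      · exact hUS h
      · exact (mem_sdiff.mp (hPS h)).1
    · intro x hxm
      rw [mem_sdiff] at hxm
      have h1 := hW hxm.1
      rw [mem_sdiff] at h1
      refine mem_sdiff.mpr ⟨h1.1, fun hc => ?_⟩
      rcases mem_union.mp hc with h | h
      · exact h1.2 h
      · exact hxm.2 h
  · -- left inverse
    rintro ⟨I, T, U⟩ hx
    simp only [mem_sigma, mem_filter, mem_powerset] at hx
    obtain ⟨⟨hIS, hIne⟩, hT, hU, hUne⟩ := hx
    have h1 : U ∪ (I \ U) = I := union_sdiff_of_subset hU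
    have hdisj : Disjoint (I \ U) T := by
      rw [Finset.disjoint_left]
      intro x hx1 hx2
      exact (mem_sdiff.mp (hT hx2)).2 (mem_sdiff.mp hx1).1
    have h2 : (I \ U ∪ T) \ (I \ U) = T := union_sdiff_cancel_left hdisj
    simp only [h1, h2]
  · -- right inverse
    rintro ⟨U, W, P⟩ hy
    simp only [mem_sigma, mem_filter, mem_powerset] at hy
    obtain ⟨⟨hUS, hUne⟩, hW, hP⟩ := hy
    have hdisj : Disjoint U P := by
      rw [Finset.disjoint_left]
      intro x hx1 hx2
      exact (mem_sdiff.mp (hW (hP hx2))).2 hx1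
    have h1 : (U ∪ P) \ U = P := union_sdiff_cancel_left hdisj
    have h2 : P ∪ (W \ P) = W := union_sdiff_of_subset hP
    simp only [h1, h2]
  · -- term equality
    rintro ⟨I, T, U⟩ hx
    simp only [mem_sigma, mem_filter, mem_powerset] at hx
    obtain ⟨⟨hIS, hIne⟩, hT, hU, hUne⟩ := hx
    have h1 : U ∪ (I \ U) = I := union_sdiff_of_subset hU
    have hdisj : Disjoint (I \ U) T := by
      rw [Finset.disjoint_left]
      intro x hx1 hx2
      exact (mem_sdiff.mp (hT hx2)).2 (mem_sdiff.mp hx1).1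
    have h2 : (I \ U ∪ T) \ (I \ U) = T := union_sdiff_cancel_left hdisj
    have hset : S \ (U ∪ (I \ U ∪ T)) = (S \ I) \ T := by
      rw [← union_assoc, h1]
      ext x
      simp only [mem_sdiff, mem_union]
      tauto
    have hc1 : (S \ I).card + I.card = S.card := card_sdiff_add_card_eq_card hIS
    have hc2 : (I \ U ∪ T).card = (I \ U).card + T.card :=
      card_union_of_disjoint hdisj
    have hc3 : (I \ U).card + U.card = I.card := card_sdiff_add_card_eq_card hU
    have hsign : ((-1 : V)) ^ ((S \ I).card + T.card + (I.card + U.card))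
        = (-1 : V) ^ (S.card + U.card + (I \ U ∪ T).card + (I \ U).card) :=
      neg_one_pow_par (by omega)
    simp only [h2, hset, hsign]

lemma M2 (A B : V → V) (S : Finset ι) (f : ι → V) :
    ∑ I ∈ S.powerset.filter (fun I => I.Nonempty), Kz B I f * Kz A (S \ I) f
    = ∑ I ∈ S.powerset.filter (fun I => I.Nonempty), Kz A I f * Kz B (S \ I) f := by
  rw [Finset.sum_filter_of_ne (fun I _ h => by
      by_contra hne
      rw [Finset.not_nonempty_iff_eq_empty] at hne
      subst hne
      rw [Kz_empty, zero_mul] at h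
      exact h rfl),
    Finset.sum_filter_of_ne (fun I _ h => by
      by_contra hne
      rw [Finset.not_nonempty_iff_eq_empty] at hne
      subst hne
      rw [Kz_empty, zero_mul] at h
      exact h rfl)]
  refine Finset.sum_nbij' (i := fun I => S \ I) (j := fun I => S \ I) ?_ ?_ ?_ ?_ ?_
  · intro I _; exact mem_powerset.mpr sdiff_subset
  · intro I _; exact mem_powerset.mpr sdiff_subset
  · intro I hI; exact Finset.sdiff_sdiff_eq_self (mem_powerset.mp hI)
  · intro I hI; exact Finset.sdiff_sdiff_eq_self (mem_powerset.mp hI)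
  · intro I hI
    rw [Finset.sdiff_sdiff_eq_self (mem_powerset.mp hI), mul_comm]

lemma main [Algebra ℂ V] (A B : V →ₗ[ℂ] V) (S : Finset ι) (f : ι → V) :
    Kz (fun x => A (B x) - B (A x)) S f
    = ∑ I ∈ S.powerset.filter (fun I => I.Nonempty),
        ((KFz (fun x => A (Kz (⇑B) I f * x)) (S \ I) f - Kz (⇑B) I f * Kz (⇑A) (S \ I) f)
         - (KFz (fun x => B (Kz (⇑A) I f * x)) (S \ I) f - Kz (⇑A) I f * Kz (⇑B) (S \ I) f)) := by
  rw [Kz_sub (D₁ := fun x => A (B x)) (D₂ := fun x => B (A x)), ← M1 A (⇑B) S f, ← M1 B (⇑A) S f]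
  rw [Finset.sum_sub_distrib]
  rw [Finset.sum_sub_distrib, Finset.sum_sub_distrib, M2 (⇑A) (⇑B) S f]
  ring

/-- reindexing along `orderIsoOfFin` -/
lemma ois_emb_map {k : ℕ} (S : Finset ι) [LinearOrder ι] (hs : S.card = k) :
    (Finset.univ : Finset (Fin k)).map
      ⟨fun a => ((S.orderIsoOfFin hs a) : ι),
        fun a b hab => (S.orderIsoOfFin hs).injective (Subtype.coe_injective hab)⟩ = S := by
  ext x
  simp only [Finset.mem_map, Finset.mem_univ, true_and, Function.Embedding.coeFn_mk]
  constructor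
  · rintro ⟨a, rfl⟩; exact (S.orderIsoOfFin hs a).2
  · intro hx; exact ⟨(S.orderIsoOfFin hs).symm ⟨x, hx⟩, congrArg Subtype.val ((S.orderIsoOfFin hs).apply_symm_apply ⟨x, hx⟩)⟩

lemma Kz_ois {k : ℕ} [LinearOrder ι] (S : Finset ι) (hs : S.card = k) (D : V → V) (f : ι → V) :
    Kz D (Finset.univ : Finset (Fin k)) (fun a => f ((S.orderIsoOfFin hs a) : ι)) = Kz D S f := by
  conv_rhs => rw [← ois_emb_map S hs, Kz_map]
  rfl

lemma KFz_ois {k : ℕ} [LinearOrder ι] (S : Finset ι) (hs : S.card = k) (D : V → V) (f : ι → V) :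
    KFz D (Finset.univ : Finset (Fin k)) (fun a => f ((S.orderIsoOfFin hs a) : ι)) = KFz D S f := by
  conv_rhs => rw [← ois_emb_map S hs, KFz_map]
  rfl


end KoszulAux

/-- The Koszul bracket hierarchy of an operator `D` on a commutative algebra:
`⟨f⟩₁ = D f` and
`⟨f₁,…,f_{l+1}⟩_{l+1} = ⟨f₁,…,f_{l-1},f_l·f_{l+1}⟩_l − ⟨f₁,…,f_l⟩_l·f_{l+1} − f_l·⟨f₁,…,f_{l-1},f_{l+1}⟩_l`. -/
def koszul {V : Type*} [CommRing V] (D : V → V) : (l : ℕ) → (Fin l → V) → V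
  | 0, _ => 0
  | 1, f => D (f 0)
  | l + 2, f =>
      koszul D (l + 1)
        (Fin.snoc (fun i : Fin l => f i.castSucc.castSucc)
          (f ⟨l, by omega⟩ * f ⟨l + 1, by omega⟩))
      - koszul D (l + 1) (fun i => f i.castSucc) * f ⟨l + 1, by omega⟩
      - f ⟨l, by omega⟩ *
          koszul D (l + 1)
            (Fin.snoc (fun i : Fin l => f i.castSucc.castSucc) (f ⟨l + 1, by omega⟩))

/-- `D` is a differential operator of order at most `l` if the `(l+1)`-st Koszul
bracket vanishes identically. -/
def IsDiffOpOfOrderAtMost {V : Type*} [CommRing V] (D : V → V) (l : ℕ) : Prop :=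
  ∀ f : Fin (l + 1) → V, koszul D (l + 1) f = 0

lemma koszul_eq_Kz {V : Type*} [CommRing V] (D : V → V) :
    ∀ (l : ℕ) (f : Fin l → V), koszul D l f = Kz D Finset.univ f := by
  intro l
  induction l using Nat.strong_induction_on with
  | _ l ih =>
    match l with
    | 0 =>
      intro f
      rw [show koszul D 0 f = 0 from rfl, Finset.univ_eq_empty, Kz_empty]
    | 1 =>
      intro f
      rw [show koszul D 1 f = D (f 0) from rfl]
      rw [show (Finset.univ : Finset (Fin 1)) = {0} from rfl,
        show ({0} : Finset (Fin 1)) = insert 0 ∅ from rfl,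
        Kz_insert (Finset.notMem_empty _), Kz_empty]
      simp [KFz]
    | (l + 2) =>
      intro f
      set a : Fin (l + 2) := ⟨l, by omega⟩ with ha_def
      set b : Fin (l + 2) := ⟨l + 1, by omega⟩ with hb_def
      have hab : a ≠ b := by simp [ha_def, hb_def, Fin.ext_iff]
      set e2 : Fin l ↪ Fin (l + 2) :=
        ⟨fun i => i.castSucc.castSucc, fun i j h => by
          apply Fin.ext
          have := congrArg Fin.val h
          simpa using this⟩ with he2
      set e1 : Fin (l + 1) ↪ Fin (l + 2) :=
        ⟨Fin.castSucc, Fin.castSucc_injective _⟩ with he1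
      set S₀ : Finset (Fin (l + 2)) := Finset.univ.map e2 with hS₀
      have hmem : ∀ x : Fin (l + 2), x ∈ S₀ ↔ (x : ℕ) < l := by
        intro x
        simp only [hS₀, Finset.mem_map, Finset.mem_univ, true_and, he2,
          Function.Embedding.coeFn_mk]
        constructor
        · rintro ⟨i, rfl⟩; exact i.isLt
        · intro h; exact ⟨⟨x, h⟩, by apply Fin.ext; rfl⟩
      have hS0a : a ∉ S₀ := by rw [hmem]; simp [ha_def]
      have hS0b : b ∉ S₀ := by rw [hmem]; simp [hb_def]
      have hins_a : a ∉ insert b S₀ := by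
        simp only [Finset.mem_insert]
        rintro (h | h)
        · exact hab h
        · exact hS0a h
      have hmap1 : (Finset.univ : Finset (Fin (l + 1))).map e1 = insert a S₀ := by
        ext x
        simp only [Finset.mem_map, Finset.mem_univ, true_and, Finset.mem_insert, he1,
          Function.Embedding.coeFn_mk, hmem x]
        constructor
        · rintro ⟨i, rfl⟩
          have hi := i.isLt
          by_cases h : (i : ℕ) = l
          · left; apply Fin.ext; simpa [ha_def]
          · right; simpa using by omega
        · rintro (rfl | h)
          · exact ⟨⟨l, by omega⟩, by apply Fin.ext; simp [ha_def]⟩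
          · exact ⟨⟨x, by omega⟩, by apply Fin.ext; simp⟩
      have huniv : (Finset.univ : Finset (Fin (l + 2))) = insert a (insert b S₀) := by
        ext x
        simp only [Finset.mem_univ, Finset.mem_insert, true_iff, hmem x]
        have := x.isLt
        rw [Fin.ext_iff, Fin.ext_iff]
        simp only [ha_def, hb_def]
        omega
      -- the three functions on `Fin (l+1)` and their `Fin (l+2)` counterparts
      set f₁ : Fin (l + 2) → V := fun x => if x = a then f a * f b else f x with hf₁
      set f₃ : Fin (l + 2) → V := fun x => if x = a then f b else f x with hf₃
      have hg1 : (Fin.snoc (fun i : Fin l => f i.castSucc.castSucc) (f a * f b) :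
          Fin (l+1) → V) = f₁ ∘ e1 := by
        funext j
        refine Fin.lastCases ?_ (fun i => ?_) j
        · rw [Fin.snoc_last]
          have h0 : e1 (Fin.last l) = a := by apply Fin.ext; simp [ha_def, he1]
          simp [Function.comp_apply, hf₁, h0]
        · rw [Fin.snoc_castSucc]
          have hne : e1 i.castSucc ≠ a := by
            intro h
            have h2 := congrArg Fin.val h
            simp [he1, ha_def] at h2
            omega
          simp only [Function.comp_apply, hf₁, if_neg hne]
          rfl
      have hg3 : (Fin.snoc (fun i : Fin l => f i.castSucc.castSucc) (f b) :
          Fin (l+1) → V) = f₃ ∘ e1 := by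
        funext j
        refine Fin.lastCases ?_ (fun i => ?_) j
        · rw [Fin.snoc_last]
          have h0 : e1 (Fin.last l) = a := by apply Fin.ext; simp [ha_def, he1]
          simp [Function.comp_apply, hf₃, h0]
        · rw [Fin.snoc_castSucc]
          have hne : e1 i.castSucc ≠ a := by
            intro h
            have h2 := congrArg Fin.val h
            simp [he1, ha_def] at h2
            omega
          simp only [Function.comp_apply, hf₃, if_neg hne]
          rfl
      have hg2 : (fun i : Fin (l+1) => f i.castSucc) = f ∘ e1 := rfl
      have step : koszul D (l + 2) f
          = koszul D (l+1) (f₁ ∘ e1) - koszul D (l+1) (f ∘ e1) * f b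
            - f a * koszul D (l+1) (f₃ ∘ e1) := by
        rw [show koszul D (l+2) f =
          koszul D (l + 1)
            (Fin.snoc (fun i : Fin l => f i.castSucc.castSucc) (f ⟨l, by omega⟩ * f ⟨l+1, by omega⟩))
          - koszul D (l + 1) (fun i => f i.castSucc) * f ⟨l+1, by omega⟩
          - f ⟨l, by omega⟩ *
              koszul D (l + 1)
                (Fin.snoc (fun i : Fin l => f i.castSucc.castSucc) (f ⟨l+1, by omega⟩)) from rfl]
        rw [← ha_def, ← hb_def, hg1, hg2, hg3]
      rw [step, ih (l+1) (by omega), ih (l+1) (by omega), ih (l+1) (by omega)]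
      rw [← Kz_map e1 Finset.univ D f₁, ← Kz_map e1 Finset.univ D f,
        ← Kz_map e1 Finset.univ D f₃, hmap1, huniv]
      -- now pure `Kz`/`KFz` algebra
      have hne_of_mem : ∀ i ∈ S₀, i ≠ a := fun i hi h => hS0a (h ▸ hi)
      have E1 : Kz D (insert a (insert b S₀)) f
          = KFz (fun x => D (f a * x)) (insert b S₀) f - f a * Kz D (insert b S₀) f :=
        Kz_insert hins_a
      have E2 : KFz (fun x => D (f a * x)) (insert b S₀) f
          = KFz (fun x => D (f a * (f b * x))) S₀ f - f b * KFz (fun x => D (f a * x)) S₀ f :=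
        KFz_insert hS0b
      have E2' : (fun x : V => D (f a * (f b * x))) = (fun x : V => D (f a * f b * x)) := by
        funext x; rw [mul_assoc]
      have E3 : Kz D (insert b S₀) f
          = KFz (fun x => D (f b * x)) S₀ f - f b * Kz D S₀ f := Kz_insert hS0b
      have E4 : Kz D (insert a S₀) f₁
          = KFz (fun x => D (f a * f b * x)) S₀ f - (f a * f b) * Kz D S₀ f := by
        rw [Kz_insert hS0a]
        have h1 : f₁ a = f a * f b := by simp [hf₁]
        rw [h1]
        rw [show Kz D S₀ f₁ = Kz D S₀ f from
            (Kz_congr (fun i hi => (if_neg (hne_of_mem i hi) : f₁ i = f i).symm)).symm,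
          show KFz (fun x => D (f a * f b * x)) S₀ f₁ = KFz (fun x => D (f a * f b * x)) S₀ f from
            (KFz_congr (fun i hi => (if_neg (hne_of_mem i hi) : f₁ i = f i).symm)).symm]
      have E5 : Kz D (insert a S₀) f
          = KFz (fun x => D (f a * x)) S₀ f - f a * Kz D S₀ f := Kz_insert hS0a
      have E6 : Kz D (insert a S₀) f₃
          = KFz (fun x => D (f b * x)) S₀ f - f b * Kz D S₀ f := by
        rw [Kz_insert hS0a]
        have h1 : f₃ a = f b := by simp [hf₃]
        rw [h1]
        rw [show Kz D S₀ f₃ = Kz D S₀ f from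
            (Kz_congr (fun i hi => (if_neg (hne_of_mem i hi) : f₃ i = f i).symm)).symm,
          show KFz (fun x => D (f b * x)) S₀ f₃ = KFz (fun x => D (f b * x)) S₀ f from
            (KFz_congr (fun i hi => (if_neg (hne_of_mem i hi) : f₃ i = f i).symm)).symm]
      rw [E1, E2, E2', E3, E4, E5, E6]
      ring

lemma koszul_cons {V : Type*} [CommRing V] (D : V → V) (m : ℕ) (g : V) (h : Fin m → V) :
    koszul D (m + 1) (Fin.cons g h)
    = KFz (fun x => D (g * x)) (Finset.univ : Finset (Fin m)) h
      - g * Kz D Finset.univ h := by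
  rw [koszul_eq_Kz]
  have e : Fin m ↪ Fin (m + 1) := ⟨Fin.succ, Fin.succ_injective m⟩
  have h0 : (0 : Fin (m + 1)) ∉ Finset.univ.map (⟨Fin.succ, Fin.succ_injective m⟩ : Fin m ↪ Fin (m+1)) := by
    simp only [Finset.mem_map, Finset.mem_univ, true_and, Function.Embedding.coeFn_mk]
    rintro ⟨i, hi⟩
    exact Fin.succ_ne_zero i hi
  have huniv : (Finset.univ : Finset (Fin (m + 1)))
      = insert 0 (Finset.univ.map (⟨Fin.succ, Fin.succ_injective m⟩ : Fin m ↪ Fin (m+1))) := by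
    ext x
    simp only [Finset.mem_univ, Finset.mem_insert, Finset.mem_map, Finset.mem_univ, true_and,
      Function.Embedding.coeFn_mk, true_iff]
    rcases Fin.eq_zero_or_eq_succ x with h | ⟨y, rfl⟩
    · exact Or.inl h
    · exact Or.inr ⟨y, rfl⟩
  rw [huniv, Kz_insert h0, KFz_map, Kz_map]
  have hcomp : (Fin.cons g h : Fin (m+1) → V) ∘ (⟨Fin.succ, Fin.succ_injective m⟩ : Fin m ↪ Fin (m+1)) = h := by
    funext i
    simp
  rw [hcomp]
  norm_num

/-- Koszul brackets of a commutator `[A,B] = A∘B − B∘A`: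
`⟨f₁,…,f_n⟩ⁿ^{[A,B]} = Σ_{∅≠I⊆{1,…,n}} (⟨⟨f_I⟩^B, f_J⟩^A − ⟨⟨f_I⟩^A, f_J⟩^B)`
where `J = Iᶜ`. -/
theorem koszul_commutator {V : Type*} [CommRing V] [Algebra ℂ V]
    (A B : V →ₗ[ℂ] V) (n : ℕ) (hn : 1 ≤ n) (f : Fin n → V) :
    koszul (⇑(A ∘ₗ B - B ∘ₗ A)) n f =
      ∑ I ∈ Finset.univ.powerset.filter (fun I : Finset (Fin n) => I.Nonempty),
        (koszul (⇑A) (n - I.card + 1)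
            (Fin.cons (koszul (⇑B) I.card (fun a => f (I.orderIsoOfFin rfl a).1))
              (fun b => f ((Iᶜ).orderIsoOfFin (by simp [Finset.card_compl]) b).1))
          - koszul (⇑B) (n - I.card + 1)
              (Fin.cons (koszul (⇑A) I.card (fun a => f (I.orderIsoOfFin rfl a).1))
                (fun b => f ((Iᶜ).orderIsoOfFin (by simp [Finset.card_compl]) b).1))) := by
  classical
  have hco : ⇑(A ∘ₗ B - B ∘ₗ A) = fun x => A (B x) - B (A x) := by
    funext x; simp
  rw [hco, koszul_eq_Kz _ n f, main A B Finset.univ f]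
  refine Finset.sum_congr rfl fun I hI => ?_
  have hc : Iᶜ.card = n - I.card := by simp [Finset.card_compl]
  have hgB : koszul (⇑B) I.card (fun a => f (I.orderIsoOfFin rfl a).1) = Kz (⇑B) I f := by
    rw [koszul_eq_Kz, Kz_ois I rfl (⇑B) f]
  have hgA : koszul (⇑A) I.card (fun a => f (I.orderIsoOfFin rfl a).1) = Kz (⇑A) I f := by
    rw [koszul_eq_Kz, Kz_ois I rfl (⇑A) f]
  have hsd : Finset.univ \ I = Iᶜ := (Finset.compl_eq_univ_sdiff I).symm
  rw [hgA, hgB, koszul_cons, koszul_cons,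
    KFz_ois Iᶜ hc, Kz_ois Iᶜ hc, KFz_ois Iᶜ hc, Kz_ois Iᶜ hc, hsd]
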